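/- For π a cyclic-interval partition of {1,...,n} and ρ ∈ NC(n), one has d_H(π,ρ) = |π| + |ρ| − 2|π ∨ ρ|, where ∨ is the join in NC(n). -/

import Mathlib

/-- A partition of `{1,...,n}` (modeled as a setoid on `Fin n`) is non-crossing. -/
def IsNoncrossing {n : ℕ} (s : Setoid (Fin n)) : Prop :=
  ∀ a b c d : Fin n, a < b → b < c → c < d → s.r a c → s.r b d → s.r a b

/-- `NC n`: the set of non-crossing partitions of `{1,...,n}`, ordered by reverse
refinement (the order induced from the refinement order on setoids). -/
abbrev NC (n : ℕ) := {s : Setoid (Fin n) // IsNoncrossing s}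

/-- The number of blocks of a partition. -/
noncomputable def blocks {n : ℕ} (s : Setoid (Fin n)) : ℕ := Nat.card (Quotient s)

/-- The Hasse diagram of `NC n`: vertices are non-crossing partitions, edges join
pairs where one covers the other. -/
def hasse (n : ℕ) : SimpleGraph (NC n) where
  Adj x y := x ⋖ y ∨ y ⋖ x
  symm := ⟨fun _ _ h => h.symm⟩
  loopless := ⟨fun x h => lt_irrefl x (h.elim CovBy.lt CovBy.lt)⟩

/-- An interval partition: every block is an interval of consecutive elements. -/
def IsIntervalPartition {n : ℕ} (s : Setoid (Fin n)) : Prop :=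
  ∀ a b c : Fin n, a ≤ b → b ≤ c → s.r a c → s.r a b

/-- A cyclic shift of an interval partition: for some shift `k`, pulling the
partition back along `i ↦ i + k` yields an interval partition. -/
def IsCyclicIntervalPartition {n : ℕ} (s : Setoid (Fin n)) : Prop :=
  ∃ k : Fin n, IsIntervalPartition (Setoid.comap (fun i => i + k) s)

/-!
`NC n` is graded by the number of blocks: a cover `x ⋖ y` merges exactly two blocks, since
joining `x` with a pair `a < b` that is consecutive in a block of `y` stays non-crossing.
So walking up from `π` to `π ∨ ρ` and down to `ρ` gives `d_H(π, ρ) ≤ |π| + |ρ| - 2|π ∨ ρ|`.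
Conversely, with `⊔` the join of all partitions, the potential `x ↦ |x| - 2|x ⊔ ρ|` changes
by at most one along each edge of the Hasse diagram (merging two blocks of `x` merges at most
two blocks of `x ⊔ ρ`); it equals `|π| - 2|π ⊔ ρ|` at `π` and `-|ρ|` at `ρ`. The two bounds
meet because for a cyclic-interval `π` the partition `π ⊔ ρ` is already non-crossing, so it
is `π ∨ ρ`.
-/

open Relation

section Crossing

variable {α : Type*}

theorem Relation.ReflTransGen.exists_rel_mem_not_mem {r : α → α → Prop} {S : Set α} {x y : α}
    (h : ReflTransGen r x y) (hx : x ∈ S) (hy : y ∉ S) :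
    ∃ p q, ReflTransGen r x p ∧ r p q ∧ p ∈ S ∧ q ∉ S := by
  induction h using ReflTransGen.head_induction_on with
  | refl => exact absurd hx hy
  | @head x c hxc _ ih =>
    by_cases hc : c ∈ S
    · obtain ⟨p, q, hcp, hpq, hp, hq⟩ := ih hc
      exact ⟨p, q, .head hxc hcp, hpq, hp, hq⟩
    · exact ⟨x, c, .refl, hxc, hx, hc⟩

variable [LinearOrder α] {R : α → α → Prop} [Std.Symm R]

theorem Relation.ReflTransGen.mem_Ioo_of_crossing
    (hR : ∀ a b c d, a < b → b < c → c < d → R a c → R b d → ReflTransGen R a b)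
    {p q u v : α} (hpq : R p q) (hu : u ∈ Set.Ioo p q) (hpu : ¬ ReflTransGen R p u)
    (huv : ReflTransGen R u v) : v ∈ Set.Ioo p q := by
  by_contra hv
  obtain ⟨r, s, hur, hrs, ⟨hpr, hrq⟩, hs⟩ := huv.exists_rel_mem_not_mem hu hv
  have hnpr : ¬ ReflTransGen R p r := fun h => hpu (h.trans (symm hur))
  have hnps : ¬ ReflTransGen R p s := fun h => hnpr (h.tail (symm hrs))
  rcases lt_or_ge s p with hsp | hps
  · exact hnps (symm (hR s p r q hsp hpr hrq (symm hrs) hpq))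
  · have hqs : q < s := by
      refine lt_of_le_of_ne (not_lt.1 fun hsq => hs ⟨hps.lt_of_ne ?_, hsq⟩) ?_
      · rintro rfl; exact hnps .refl
      · rintro rfl; exact hnps (.single hpq)
    exact hnpr (hR p r q s hpr hrq hqs hpq hrs)

theorem Relation.ReflTransGen.noncrossing
    (hR : ∀ a b c d, a < b → b < c → c < d → R a c → R b d → ReflTransGen R a b)
    {a b c d : α} (hab : a < b) (hbc : b < c) (hcd : c < d)
    (hac : ReflTransGen R a c) (hbd : ReflTransGen R b d) : ReflTransGen R a b := by
  by_contra hnab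
  have hnbc : ¬ ReflTransGen R b c := fun h => hnab (hac.trans (symm h))
  -- The edge `p q` on which the path from `a` to `c` jumps over `b` and the edge `r s` on which
  -- the path from `b` to `d` jumps over `c` would each have to lie inside the other.
  obtain ⟨p, q, hap, hpq, hpb, hbq⟩ :=
    hac.exists_rel_mem_not_mem (S := Set.Iio b) hab (not_lt.2 hbc.le)
  obtain ⟨r, s, hbr, hrs, hrc, hcs⟩ :=
    hbd.exists_rel_mem_not_mem (S := Set.Iio c) hbc (not_lt.2 hcd.le)
  have hb : b ∈ Set.Ioo p q :=
    ⟨hpb, (not_lt.1 hbq).lt_of_ne fun h => hnab (h ▸ hap.tail hpq)⟩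
  have hc : c ∈ Set.Ioo r s :=
    ⟨hrc, (not_lt.1 hcs).lt_of_ne fun h => hnbc (h ▸ hbr.tail hrs)⟩
  have hrpq := hbr.mem_Ioo_of_crossing hR hpq hb fun h => hnab (hap.trans h)
  have hprs :=
    ((symm hac).trans hap).mem_Ioo_of_crossing hR hrs hc fun h => hnbc (hbr.trans h)
  exact lt_asymm hrpq.1 hprs.1

end Crossing

namespace Setoid

variable {α : Type*}

instance (s t : Setoid α) : Std.Symm fun u v => s u v ∨ t u v :=
  ⟨fun _ _ => Or.imp s.symm' t.symm'⟩

theorem sup_iff_reflTransGen (s t : Setoid α) {x y : α} :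
    (s ⊔ t) x y ↔ ReflTransGen (fun u v => s u v ∨ t u v) x y := by
  rw [sup_eq_eqvGen, ← EqvGen.eqvGen_eq_reflTransGen]
  rfl

def pair (a b : α) : Setoid α where
  r u v := u = v ∨ (u = a ∧ v = b) ∨ (u = b ∧ v = a)
  iseqv := ⟨fun _ => .inl rfl, by grind, by grind⟩

theorem pair_le_iff {a b : α} {t : Setoid α} : pair a b ≤ t ↔ t a b := by
  refine ⟨fun h => h (.inr (.inl ⟨rfl, rfl⟩)), fun h u v => ?_⟩
  rintro (rfl | ⟨rfl, rfl⟩ | ⟨rfl, rfl⟩)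
  exacts [t.refl' u, h, t.symm' h]

theorem sup_pair_iff (s : Setoid α) (a b u v : α) :
    (s ⊔ pair a b) u v ↔ s u v ∨ (s u a ∧ s b v) ∨ (s u b ∧ s a v) := by
  constructor
  · rw [sup_iff_reflTransGen]
    intro h
    induction h with
    | refl => exact .inl (s.refl' u)
    | tail _ hst ih =>
      rcases hst with hst | rfl | ⟨rfl, rfl⟩ | ⟨rfl, rfl⟩
      · exact ih.imp (s.trans' · hst) (Or.imp (.imp_right (s.trans' · hst))
          (.imp_right (s.trans' · hst)))
      · exact ih
      · rcases ih with h | ⟨h₁, h₂⟩ | ⟨h₁, h₂⟩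
        exacts [.inr (.inl ⟨h, s.refl' _⟩), .inl (s.trans' h₁ (s.symm' h₂)), .inl h₁]
      · rcases ih with h | ⟨h₁, h₂⟩ | ⟨h₁, h₂⟩
        exacts [.inr (.inr ⟨h, s.refl' _⟩), .inl h₁, .inl (s.trans' h₁ (s.symm' h₂))]
  · set m := s ⊔ pair a b
    have hs : s ≤ m := le_sup_left
    have hab : m a b := pair_le_iff.1 le_sup_right
    rintro (h | ⟨h₁, h₂⟩ | ⟨h₁, h₂⟩)
    · exact hs h
    · exact m.trans' (hs h₁) (m.trans' hab (hs h₂))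
    · exact m.trans' (hs h₁) (m.trans' (m.symm' hab) (hs h₂))

theorem map_of_le_surjective {s t : Setoid α} (h : s ≤ t) : Function.Surjective (map_of_le h) :=
  Quotient.ind fun a => ⟨Quotient.mk s a, rfl⟩

instance [Finite α] : Finite (Setoid α) :=
  Finite.of_injective (fun s : Setoid α => (s : α → α → Prop))
    fun _ _ h => Setoid.ext fun a b => Iff.of_eq (congrFun₂ h a b)

theorem exists_lt_rel_not_rel_of_lt [LinearOrder α] {s t : Setoid α} (h : s < t) :
    ∃ a b, a < b ∧ t a b ∧ ¬ s a b := by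
  obtain ⟨u, v, htuv, hsuv⟩ : ∃ u v, t u v ∧ ¬ s u v := by
    simpa [Setoid.le_def] using h.not_ge
  rcases lt_trichotomy u v with huv | rfl | hvu
  · exact ⟨u, v, huv, htuv, hsuv⟩
  · exact absurd (s.refl' u) hsuv
  · exact ⟨v, u, hvu, t.symm' htuv, fun h => hsuv (s.symm' h)⟩

end Setoid

section Blocks

variable {n : ℕ}

open Setoid

theorem blocks_le_of_le {s t : Setoid (Fin n)} (h : s ≤ t) : blocks t ≤ blocks s :=
  Nat.card_le_card_of_surjective _ (map_of_le_surjective h)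

theorem blocks_lt_of_lt {s t : Setoid (Fin n)} (h : s < t) : blocks t < blocks s := by
  refine (blocks_le_of_le h.le).lt_of_ne fun heq => h.not_ge fun x y hxy => ?_
  have hinj := ((map_of_le_surjective h.le).bijective_of_nat_card_le heq.ge).1
  exact Quotient.exact (hinj (Quotient.sound hxy : Quotient.mk t x = Quotient.mk t y))

theorem eq_of_le_of_blocks_le {s t : Setoid (Fin n)} (h : s ≤ t) (hb : blocks s ≤ blocks t) :
    s = t :=
  h.eq_of_not_lt fun hlt => (blocks_lt_of_lt hlt).not_ge hb

theorem blocks_le_blocks_sup_pair_add_one (s : Setoid (Fin n)) (a b : Fin n) :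
    blocks s ≤ blocks (s ⊔ pair a b) + 1 := by
  classical
  set f : Quotient s → Option (Quotient (s ⊔ pair a b)) := fun q =>
    if q = Quotient.mk s b then none else some (map_of_le le_sup_left q)
  have hf : f.Injective := by
    refine Quotient.ind₂ fun u v huv => Quotient.sound ?_
    by_cases hu : s u b <;> by_cases hv : s v b
    · exact s.trans' hu (s.symm' hv)
    all_goals simp only [f, Quotient.eq, hu, hv, if_true, if_false, reduceCtorEq,
      Option.some.injEq] at huv
    rcases (sup_pair_iff s a b u v).1 (Quotient.exact huv) with h | ⟨-, h⟩ | ⟨h, -⟩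
    exacts [h, absurd (s.symm' h) hv, absurd h hu]
  simpa [blocks] using Nat.card_le_card_of_injective f hf

theorem exists_eq_sup_pair_of_blocks_eq_add_one {s t : Setoid (Fin n)} (hst : s ≤ t)
    (hb : blocks s = blocks t + 1) :
    ∃ a b, t = s ⊔ pair a b := by
  obtain ⟨a, b, htab, hsab⟩ : ∃ a b, t a b ∧ ¬ s a b := by
    simpa [Setoid.le_def] using (hst.lt_of_ne (by rintro rfl; omega)).not_ge
  refine ⟨a, b, (eq_of_le_of_blocks_le (sup_le hst (pair_le_iff.2 htab)) ?_).symm⟩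
  have := blocks_lt_of_lt (left_lt_sup.2 (mt pair_le_iff.1 hsab))
  omega

theorem blocks_sup_le_of_blocks_eq_add_one {s t : Setoid (Fin n)} (hst : s ≤ t)
    (hb : blocks s = blocks t + 1) (r : Setoid (Fin n)) :
    blocks (s ⊔ r) ≤ blocks (t ⊔ r) + 1 := by
  obtain ⟨a, b, rfl⟩ := exists_eq_sup_pair_of_blocks_eq_add_one hst hb
  rw [sup_right_comm]
  exact blocks_le_blocks_sup_pair_add_one _ a b

end Blocks

section Noncrossing

variable {n : ℕ}

theorem exists_consecutive_rel_not_rel {x y : Setoid (Fin n)} {a b : Fin n} (hab : a < b)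
    (hy : y a b) (hx : ¬ x a b) :
    ∃ a b, a < b ∧ y a b ∧ ¬ x a b ∧ ∀ u, a < u → u < b → ¬ y a u := by
  induction hg : (b : ℕ) - a using Nat.strong_induction_on generalizing a b with
  | _ g ih =>
  by_cases hmid : ∃ u, a < u ∧ u < b ∧ y a u
  · obtain ⟨u, hau, hub, hyau⟩ := hmid
    rw [Fin.lt_def] at hau hub
    by_cases hxau : x a u
    · exact ih (b - u) (by omega) hub (y.trans' (y.symm' hyau) hy)
        (fun hxub => hx (x.trans' hxau hxub)) rfl
    · exact ih (u - a) (by omega) hau hyau hxau rfl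
  · push Not at hmid
    exact ⟨a, b, hab, hy, hx, hmid⟩

theorem IsNoncrossing.sup_pair {x y : Setoid (Fin n)} (hx : IsNoncrossing x)
    (hy : IsNoncrossing y) (hxy : x ≤ y) {a b : Fin n} (hab : a < b) (hyab : y a b)
    (hgap : ∀ u, a < u → u < b → ¬ y a u) : IsNoncrossing (x ⊔ Setoid.pair a b) := by
  have hinside : ∀ u v, x u v → a < u → u < b → a < v ∧ v < b := by
    intro u v hxuv hau hub
    have hyuv := hxy hxuv
    have hyau := hgap u hau hub
    refine ⟨lt_of_not_ge fun hva => ?_, lt_of_not_ge fun hbv => ?_⟩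
    · rcases hva.lt_or_eq with hva | rfl
      · exact hyau (y.trans' (y.symm' (hy v a u b hva hau hub (y.symm' hyuv) hyab))
          (y.symm' hyuv))
      · exact hyau (y.symm' hyuv)
    · rcases hbv.lt_or_eq with hbv | rfl
      · exact hyau (hy a u b v hau hub hbv hyab hyuv)
      · exact hyau (y.trans' hyab (y.symm' hyuv))
  intro p q r s hpq hqr hrs hpr hqs
  refine (Setoid.sup_iff_reflTransGen _ _).2 (ReflTransGen.noncrossing
    (fun p q r s hpq hqr hrs hpr hqs => ?_) hpq hqr hrs
    ((Setoid.sup_iff_reflTransGen _ _).1 hpr) ((Setoid.sup_iff_reflTransGen _ _).1 hqs))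
  rcases hpr with hpr | hpr | ⟨hpa, hrb⟩ | ⟨hpb, hra⟩
  · rcases hqs with hqs | hqs | ⟨hqa, hsb⟩ | ⟨hqb, hsa⟩
    · exact .single (.inl (hx _ _ _ _ hpq hqr hrs hpr hqs))
    · order
    · have := hinside _ _ (x.symm' hpr) (hqa ▸ hqr) (hsb ▸ hrs)
      order
    · order
  · order
  · rcases hqs with hqs | hqs | ⟨hqa, hsb⟩ | ⟨hqb, hsa⟩
    · have := hinside _ _ hqs (hpa ▸ hpq) (hrb ▸ hqr)
      order
    all_goals order
  · order

theorem NC.blocks_eq_add_one_of_covBy {x y : NC n} (h : x ⋖ y) :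
    blocks x.1 = blocks y.1 + 1 := by
  obtain ⟨a₀, b₀, hab₀, hy₀, hx₀⟩ :=
    Setoid.exists_lt_rel_not_rel_of_lt (show x.1 < y.1 from h.lt)
  obtain ⟨a, b, hab, hyab, hxab, hgap⟩ := exists_consecutive_rel_not_rel hab₀ hy₀ hx₀
  have hlt : x.1 < x.1 ⊔ Setoid.pair a b := left_lt_sup.2 (mt Setoid.pair_le_iff.1 hxab)
  let z : NC n := ⟨x.1 ⊔ Setoid.pair a b, x.2.sup_pair y.2 h.le hab hyab hgap⟩
  have hzy : z = y :=
    (show z ≤ y from sup_le h.le (Setoid.pair_le_iff.2 hyab)).eq_of_not_lt (h.2 hlt)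
  rw [← hzy]
  show blocks x.1 = blocks (x.1 ⊔ Setoid.pair a b) + 1
  have := blocks_lt_of_lt hlt
  have := blocks_le_blocks_sup_pair_add_one x.1 a b
  omega

theorem IsCyclicIntervalPartition.rel_cases {π : Setoid (Fin n)}
    (hπ : IsCyclicIntervalPartition π) {a c : Fin n} (hac : a ≤ c) (h : π a c) :
    (∀ z, a ≤ z → z ≤ c → π a z) ∨ (∀ z, z ≤ a ∨ c ≤ z → π a z) := by
  obtain ⟨k, hk⟩ := hπ
  have : NeZero n := ⟨k.pos.ne'⟩
  have hrel : ∀ u v : Fin n, Setoid.comap (· + k) π (u - k) (v - k) ↔ π u v := by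
    simp [Setoid.comap_rel]
  have hval : ∀ z : Fin n,
      ((z - k : Fin n) : ℕ) = if k ≤ z then (z : ℕ) - k else n + (z : ℕ) - k := by
    intro z
    split_ifs with hkz
    exacts [Fin.sub_val_of_le hkz, Fin.coe_sub_iff_lt.2 (not_le.1 hkz)]
  have := a.isLt
  have := c.isLt
  rcases le_or_gt (a - k) (c - k) with hle | hlt
  · refine .inl fun z haz hzc => (hrel a z).1 (hk _ _ _ ?_ ?_ ((hrel a c).2 h))
    all_goals
      rw [Fin.le_def] at *
      simp only [hval] at *
      have := z.isLt
      split_ifs at * <;> omega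
  · refine .inr fun z hz =>
      π.trans' h ((hrel c z).1 (hk _ _ _ ?_ ?_ ((hrel c a).2 (π.symm' h))))
    all_goals
      rw [Fin.le_def, Fin.le_def] at *
      rw [Fin.lt_def] at hlt
      simp only [hval] at *
      have := z.isLt
      split_ifs at * <;> omega

theorem IsCyclicIntervalPartition.isNoncrossing_sup {π ρ : Setoid (Fin n)}
    (hπ : IsCyclicIntervalPartition π) (hρ : IsNoncrossing ρ) : IsNoncrossing (π ⊔ ρ) := by
  intro a b c d hab hbc hcd hac hbd
  refine (Setoid.sup_iff_reflTransGen _ _).2 (ReflTransGen.noncrossing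
    (fun p q r s hpq hqr hrs hpr hqs => ?_) hab hbc hcd
    ((Setoid.sup_iff_reflTransGen _ _).1 hac) ((Setoid.sup_iff_reflTransGen _ _).1 hbd))
  rcases hpr with hpr | hpr
  · rcases hπ.rel_cases (hpq.trans hqr).le hpr with hin | hout
    · exact .single (.inl (hin q hpq.le hqr.le))
    · exact .tail (.single (.inl (hout s (.inr hrs.le)))) (hqs.imp π.symm' ρ.symm')
  · rcases hqs with hqs | hqs
    · rcases hπ.rel_cases (hqr.trans hrs).le hqs with hin | hout
      · exact .tail (.single (.inr hpr)) (.inl (π.symm' (hin r hqr.le hrs.le)))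
      · exact .single (.inl (π.symm' (hout p (.inl hpq.le))))
    · exact .single (.inr (hρ p q r s hpq hqr hrs hpr hqs))

theorem NC.val_eq_sup_of_isLUB {π ρ j : NC n} (hsup : IsNoncrossing (π.1 ⊔ ρ.1))
    (hj : IsLUB {π, ρ} j) : j.1 = π.1 ⊔ ρ.1 := by
  refine le_antisymm (hj.2 (show ⟨_, hsup⟩ ∈ upperBounds {π, ρ} from ?_))
    (sup_le (hj.1 (by simp)) (hj.1 (by simp)))
  rintro _ (rfl | rfl)
  exacts [le_sup_left (α := Setoid (Fin n)), le_sup_right (α := Setoid (Fin n))]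

end Noncrossing

theorem SimpleGraph.Walk.abs_sub_le_length {V : Type*} {G : SimpleGraph V} {f : V → ℤ}
    (hf : ∀ u v, G.Adj u v → |f u - f v| ≤ 1) {x y : V} (w : G.Walk x y) :
    |f x - f y| ≤ w.length := by
  induction w with
  | nil => simp
  | @cons u v w h p ih =>
    rw [length_cons, Nat.cast_succ, add_comm]
    exact (abs_sub_le (f u) (f v) (f w)).trans (add_le_add (hf u v h) ih)

theorem SimpleGraph.Reachable.abs_sub_le_dist {V : Type*} {G : SimpleGraph V} {f : V → ℤ}
    (hf : ∀ u v, G.Adj u v → |f u - f v| ≤ 1) {x y : V} (h : G.Reachable x y) :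
    |f x - f y| ≤ G.dist x y := by
  obtain ⟨w, hw⟩ := h.exists_walk_length_eq_dist
  exact hw ▸ w.abs_sub_le_length hf

theorem SimpleGraph.exists_hasse_walk_of_le {α : Type*} [PartialOrder α] [IsStronglyAtomic α]
    {r : α → ℕ} (hr : ∀ a b, a ⋖ b → r a = r b + 1) {a b : α} (hab : a ≤ b) :
    ∃ w : (hasse α).Walk a b, w.length + r b = r a := by
  induction hk : r a using Nat.strong_induction_on generalizing a with
  | _ k ih =>
  rcases hab.eq_or_lt with rfl | hlt
  · exact ⟨.nil, by simp [hk]⟩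
  · obtain ⟨c, hac, hcb⟩ := exists_covBy_le_of_lt hlt
    have hrc := hr a c hac
    obtain ⟨w, hw⟩ := ih (r c) (by omega) hcb rfl
    exact ⟨.cons (hasse_adj.2 (.inl hac)) w, by simp only [Walk.length_cons]; omega⟩

namespace NC

variable {n : ℕ}

theorem exists_walk_of_le {x y : NC n} (h : x ≤ y) :
    ∃ w : (hasse n).Walk x y, w.length + blocks y.1 = blocks x.1 :=
  SimpleGraph.exists_hasse_walk_of_le (r := fun x : NC n => blocks x.1)
    (fun _ _ => blocks_eq_add_one_of_covBy) h

theorem reachable (x y : NC n) : (hasse n).Reachable x y := by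
  let top : NC n := ⟨⊤, fun _ _ _ _ _ _ _ _ _ => trivial⟩
  obtain ⟨w₁, -⟩ := exists_walk_of_le (show x ≤ top from le_top (α := Setoid (Fin n)))
  obtain ⟨w₂, -⟩ := exists_walk_of_le (show y ≤ top from le_top (α := Setoid (Fin n)))
  exact ⟨w₁.append w₂.reverse⟩

theorem abs_sub_le_one_of_adj (r : Setoid (Fin n)) {x y : NC n} (h : (hasse n).Adj x y) :
    |((blocks x.1 : ℤ) - 2 * blocks (x.1 ⊔ r)) - ((blocks y.1 : ℤ) - 2 * blocks (y.1 ⊔ r))|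
      ≤ 1 := by
  wlog hxy : x ⋖ y generalizing x y
  · rw [abs_sub_comm]
    exact this h.symm (h.resolve_left hxy)
  have h₁ := blocks_eq_add_one_of_covBy hxy
  have h₂ := blocks_sup_le_of_blocks_eq_add_one hxy.le h₁ r
  have h₃ := blocks_le_of_le (sup_le_sup_right (α := Setoid (Fin n)) hxy.le r)
  rw [abs_le]
  constructor <;> omega

theorem blocks_add_blocks_le_dist_add (π ρ : NC n) :
    blocks π.1 + blocks ρ.1 ≤ (hasse n).dist π ρ + 2 * blocks (π.1 ⊔ ρ.1) := by
  have h := (reachable π ρ).abs_sub_le_dist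
    (f := fun x : NC n => (blocks x.1 : ℤ) - 2 * blocks (x.1 ⊔ ρ.1))
    (fun _ _ => abs_sub_le_one_of_adj ρ.1)
  simp only [sup_idem] at h
  rw [abs_le] at h
  omega

end NC

/-- For `π` a cyclic-interval partition and `ρ ∈ NC(n)`:
`d_H(π,ρ) = |π| + |ρ| - 2·|π ∨ ρ|` where `∨` is the join in `NC(n)` (stated
additively, `j` being the join of `π` and `ρ` in `NC n`). -/
theorem dist_cyclicInterval (n : ℕ) (π ρ : NC n)
    (hπ : IsCyclicIntervalPartition π.1) (j : NC n) (hj : IsLUB {π, ρ} j) :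
    (hasse n).dist π ρ + 2 * blocks j.1 = blocks π.1 + blocks ρ.1 := by
  have hj_eq : j.1 = π.1 ⊔ ρ.1 := NC.val_eq_sup_of_isLUB (hπ.isNoncrossing_sup ρ.2) hj
  obtain ⟨w₁, hw₁⟩ := NC.exists_walk_of_le (hj.1 (by simp) : π ≤ j)
  obtain ⟨w₂, hw₂⟩ := NC.exists_walk_of_le (hj.1 (by simp) : ρ ≤ j)
  have hupper : (hasse n).dist π ρ ≤ w₁.length + w₂.length := by
    simpa using SimpleGraph.dist_le (w₁.append w₂.reverse)
  have hlower := NC.blocks_add_blocks_le_dist_add π ρ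
  rw [← hj_eq] at hlower
  omega
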